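/- arXiv:1112.0853 — 4 statements merged into one kernel-verified Lean document; each statement's English description precedes it below -/
import Mathlib

section
/- For any integer k ≥ 1, the k-th elementary symmetric function of 1, 1/3, ..., 1/(2k+3) equals (k+1)(k+2)(3k²+11k+9) / (6 ∏_{i=0}^{k+1} (1+2i)). -/
/-!
Passing to complements, `s ↦ range (k + 2) \ s`, turns the sum of `∏_{i ∈ s} 1/(2i+1)` over
`k`-subsets into `e₂(1, 3, …, 2k+3) / ∏_{i ≤ k+1} (2i+1)`. The second elementary symmetric function
of the first `n` odd numbers satisfies `e₂(n+1) = e₂(n) + (2n+1) e₁(n)` with `e₁(n) = n²`, so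
`6 e₂(n) = n (3n³ - 4n² + 1)`, and `3(k+2)³ - 4(k+2)² + 1 = (k+1)(3k² + 11k + 9)`.
-/

open Finset

namespace Finset

variable {α : Type*} [DecidableEq α]

theorem sum_powersetCard_comp_sdiff {M : Type*} [AddCommMonoid M] (A : Finset α) {k : ℕ}
    (hk : k ≤ #A) (g : Finset α → M) :
    ∑ s ∈ A.powersetCard k, g (A \ s) = ∑ t ∈ A.powersetCard (#A - k), g t := by
  refine sum_nbij' (A \ ·) (A \ ·) ?_ ?_ ?_ ?_ fun _ _ => rfl <;>
    intro s hs <;> simp only [mem_powersetCard] at hs ⊢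
  · exact ⟨sdiff_subset, by rw [card_sdiff_of_subset hs.1, hs.2]⟩
  · exact ⟨sdiff_subset, by rw [card_sdiff_of_subset hs.1, hs.2]; omega⟩
  · exact sdiff_sdiff_eq_self hs.1
  · exact sdiff_sdiff_eq_self hs.1

theorem sum_powersetCard_prod_inv {K : Type*} [Semifield K] (A : Finset α) {f : α → K}
    (hf : ∀ i ∈ A, f i ≠ 0) {k : ℕ} (hk : k ≤ #A) :
    ∑ s ∈ A.powersetCard k, ∏ i ∈ s, (f i)⁻¹ =
      (∑ t ∈ A.powersetCard (#A - k), ∏ i ∈ t, f i) / ∏ i ∈ A, f i := by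
  have hsdiff : ∀ s ∈ A.powersetCard k, ∏ i ∈ s, (f i)⁻¹ = (∏ i ∈ A \ s, f i) / ∏ i ∈ A, f i := by
    intro s hs
    have hsA := (mem_powersetCard.1 hs).1
    have hc0 : ∏ i ∈ A \ s, f i ≠ 0 := prod_ne_zero_iff.2 fun i hi => hf i (mem_sdiff.1 hi).1
    rw [prod_inv_distrib, ← prod_sdiff hsA, div_mul_cancel_left₀ hc0]
  rw [sum_congr rfl hsdiff, ← sum_div, sum_powersetCard_comp_sdiff A hk fun t => ∏ i ∈ t, f i]

theorem sum_powersetCard_succ_insert_prod {R : Type*} [CommSemiring R] {a : α} {A : Finset α}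
    (ha : a ∉ A) (f : α → R) (k : ℕ) :
    ∑ t ∈ (insert a A).powersetCard (k + 1), ∏ i ∈ t, f i =
      ∑ t ∈ A.powersetCard (k + 1), ∏ i ∈ t, f i + f a * ∑ t ∈ A.powersetCard k, ∏ i ∈ t, f i := by
  have hnotMem : ∀ t ∈ A.powersetCard k, a ∉ t := fun t ht h => ha ((mem_powersetCard.1 ht).1 h)
  have hdisj : Disjoint (A.powersetCard (k + 1)) ((A.powersetCard k).image (insert a)) := by
    simp only [disjoint_left, mem_image, not_exists, not_and]
    intro t ht u _ hut
    exact ha ((mem_powersetCard.1 ht).1 (hut ▸ mem_insert_self a u))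
  have hinj : Set.InjOn (insert a) (A.powersetCard k : Set (Finset α)) := fun s hs t ht hst => by
    rw [← erase_insert (hnotMem s hs), hst, erase_insert (hnotMem t ht)]
  rw [powersetCard_succ_insert ha, sum_union hdisj, sum_image hinj, mul_sum]
  exact congrArg _ (sum_congr rfl fun t ht => prod_insert (hnotMem t ht))

end Finset

section OddNumbers

variable {R : Type*}

theorem sum_powersetCard_one_prod_odd [CommSemiring R] (n : ℕ) :
    ∑ t ∈ (range n).powersetCard 1, ∏ i ∈ t, (1 + 2 * i : R) = n ^ 2 := by
  induction n with
  | zero => rw [powersetCard_eq_empty.2 (by simp)]; simp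
  | succ n ih =>
    rw [range_add_one, sum_powersetCard_succ_insert_prod notMem_range_self, ih]
    simp only [powersetCard_zero, sum_singleton, prod_empty]
    push_cast
    ring

theorem six_mul_sum_powersetCard_two_prod_odd [CommRing R] (n : ℕ) :
    6 * ∑ t ∈ (range n).powersetCard 2, ∏ i ∈ t, (1 + 2 * i : R) =
      n * (3 * n ^ 3 - 4 * n ^ 2 + 1) := by
  induction n with
  | zero => rw [powersetCard_eq_empty.2 (by simp)]; simp
  | succ n ih =>
    rw [range_add_one, sum_powersetCard_succ_insert_prod notMem_range_self, mul_add, ih,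
      sum_powersetCard_one_prod_odd]
    push_cast
    ring

end OddNumbers

theorem esymm_k_of_kplus2_general (k : ℕ) :
    ∑ s ∈ (Finset.range (k + 2)).powersetCard k, ∏ i ∈ s, (1 / (1 + 2 * i) : ℚ) =
    ((k + 1 : ℚ) * (k + 2) * (3 * k ^ 2 + 11 * k + 9)) /
      (6 * ∏ i ∈ Finset.range (k + 2), ((1 + 2 * i : ℚ))) := by
  have hodd : ∀ i ∈ range (k + 2), (1 + 2 * i : ℚ) ≠ 0 := fun i _ => by positivity
  simp only [one_div]
  rw [sum_powersetCard_prod_inv _ hodd (by simp), card_range, Nat.add_sub_cancel_left,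
    ← mul_div_mul_left _ _ (by norm_num : (6 : ℚ) ≠ 0), six_mul_sum_powersetCard_two_prod_odd]
  congr 1
  push_cast
  ring

theorem esymm_k_of_kplus2 (k : ℕ) (hk : 1 ≤ k) :
    ∑ s ∈ (Finset.range (k + 2)).powersetCard k, ∏ i ∈ s, (1 / (1 + 2 * i) : ℚ) =
    ((k + 1 : ℚ) * (k + 2) * (3 * k ^ 2 + 11 * k + 9)) /
      (6 * ∏ i ∈ Finset.range (k + 2), ((1 + 2 * i : ℚ))) :=
  esymm_k_of_kplus2_general k
end

section
/- Let k and n be positive integers with e((1/2) log(2n-1) + 1) ≤ k ≤ n. Then the k-th elementary symmetric function S_k(n) of 1, 1/3, ..., 1/(2n-1) satisfies S_k(n) < 1; in particular, S_k(n) is not an integer. -/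
/-!
For positive `x₁, …, xₙ` with sum `H` and any `t > 0`, expanding `∏ (1 + t xᵢ)` shows
`tᵏ e_k(x) ≤ ∏ (1 + t xᵢ) < ∏ exp (t xᵢ) = exp (t H)`; choosing `t = k / H` gives
`e_k(x) < (e H / k)ᵏ`. For `xᵢ = 1 / (2i + 1)`, comparing with `log` bounds `H` by
`½ log (2n - 1) + 1`, so the hypothesis on `k` makes `e H / k ≤ 1`.
-/

open Finset Real

namespace Finset

variable {ι : Type*}

theorem sum_powersetCard_prod_le_prod_one_add {R : Type*} [CommSemiring R] [PartialOrder R]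
    [IsOrderedRing R] {s : Finset ι} {f : ι → R} (hf : ∀ i ∈ s, 0 ≤ f i) (k : ℕ) :
    ∑ t ∈ s.powersetCard k, ∏ i ∈ t, f i ≤ ∏ i ∈ s, (1 + f i) := by
  rw [prod_one_add]
  refine sum_le_sum_of_subset_of_nonneg (fun t ht => ?_) fun t ht _ => ?_
  · exact mem_powerset.2 (mem_powersetCard.1 ht).1
  · exact prod_nonneg fun i hi => hf i (mem_powerset.1 ht hi)

theorem pow_mul_sum_powersetCard_prod_lt_exp {s : Finset ι} (hs : s.Nonempty) {x : ι → ℝ}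
    (hx : ∀ i ∈ s, 0 < x i) {t : ℝ} (ht : 0 < t) (k : ℕ) :
    t ^ k * ∑ u ∈ s.powersetCard k, ∏ i ∈ u, x i < exp (t * ∑ i ∈ s, x i) := by
  have htx : ∀ i ∈ s, 0 < t * x i := fun i hi => mul_pos ht (hx i hi)
  calc t ^ k * ∑ u ∈ s.powersetCard k, ∏ i ∈ u, x i
      = ∑ u ∈ s.powersetCard k, ∏ i ∈ u, t * x i := by
        rw [mul_sum]
        refine sum_congr rfl fun u hu => ?_
        rw [prod_mul_distrib, prod_const, (mem_powersetCard.1 hu).2]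
    _ ≤ ∏ i ∈ s, (1 + t * x i) :=
        sum_powersetCard_prod_le_prod_one_add (fun i hi => (htx i hi).le) k
    _ < ∏ i ∈ s, exp (t * x i) := by
        refine prod_lt_prod_of_nonempty (fun i hi => ?_) (fun i hi => ?_) hs
        · linarith [htx i hi]
        · rw [add_comm]
          exact add_one_lt_exp (htx i hi).ne'
    _ = exp (t * ∑ i ∈ s, x i) := by rw [mul_sum, exp_sum]

theorem sum_powersetCard_prod_lt_pow {s : Finset ι} (hs : s.Nonempty) {x : ι → ℝ}
    (hx : ∀ i ∈ s, 0 < x i) {k : ℕ} (hk : 0 < k) :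
    ∑ u ∈ s.powersetCard k, ∏ i ∈ u, x i < (exp 1 * (∑ i ∈ s, x i) / k) ^ k := by
  set H := ∑ i ∈ s, x i
  have hH : 0 < H := sum_pos hx hs
  have hk' : (0 : ℝ) < k := Nat.cast_pos.2 hk
  have key := pow_mul_sum_powersetCard_prod_lt_exp hs hx (div_pos hk' hH) k
  rw [div_mul_cancel₀ _ hH.ne', ← mul_comm, ← lt_div_iff₀ (by positivity)] at key
  calc _ < exp k / (k / H) ^ k := key
    _ = (exp 1 * H / k) ^ k := by
      rw [← exp_one_pow, ← div_pow]
      congr 1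
      field_simp

end Finset

theorem one_div_one_add_two_mul_le_half_log_sub {m : ℕ} (hm : 1 ≤ m) :
    1 / (1 + 2 * m : ℝ) ≤ 1 / 2 * (log (2 * m + 1) - log (2 * m - 1)) := by
  have hm' : (1 : ℝ) ≤ m := Nat.one_le_cast.2 hm
  have hlog := one_sub_inv_le_log_of_pos (x := (2 * m + 1) / (2 * m - 1)) 
    (div_pos (by linarith) (by linarith))
  rw [log_div (by positivity) (by linarith), inv_div] at hlog
  have h : 1 - (2 * m - 1) / (2 * m + 1) = 2 * (1 / (1 + 2 * m : ℝ)) := by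
    field_simp
    ring
  linarith

theorem sum_range_one_div_one_add_two_mul_le {n : ℕ} (hn : 1 ≤ n) :
    ∑ i ∈ range n, (1 / (1 + 2 * i) : ℝ) ≤ 1 / 2 * log (2 * n - 1) + 1 := by
  induction n, hn using Nat.le_induction with
  | base => norm_num
  | succ m hm ih =>
    rw [sum_range_succ, Nat.cast_succ, show (2 * (m + 1 : ℝ) - 1) = 2 * m + 1 by ring]
    linarith [one_div_one_add_two_mul_le_half_log_sub hm]

theorem esymm_lt_one_of_large_k (k n : ℕ) (hk : 0 < k) (hkn : k ≤ n)
    (h : Real.exp 1 * ((1 / 2) * Real.log (2 * n - 1) + 1) ≤ k) :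
    (∑ s ∈ (Finset.range n).powersetCard k, ∏ i ∈ s, (1 / (1 + 2 * i) : ℚ)) < 1 ∧
    ∀ m : ℤ, (∑ s ∈ (Finset.range n).powersetCard k, ∏ i ∈ s, (1 / (1 + 2 * i) : ℚ)) ≠ m := by
  set q := ∑ s ∈ (range n).powersetCard k, ∏ i ∈ s, (1 / (1 + 2 * i) : ℚ)
  have hq : (q : ℝ) = ∑ s ∈ (range n).powersetCard k, ∏ i ∈ s, (1 / (1 + 2 * i) : ℝ) := by
    push_cast [q]
    rfl
  have hpos : 0 < q := by
    suffices 0 < (q : ℝ) by exact_mod_cast this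
    rw [hq]
    exact sum_pos (fun s _ => prod_pos fun i _ => by positivity)
      (powersetCard_nonempty.2 (by simpa using hkn))
  have hlt : q < 1 := by
    suffices (q : ℝ) < 1 by exact_mod_cast this
    have hH := mul_le_mul_of_nonneg_left (sum_range_one_div_one_add_two_mul_le (n := n) (by omega))
      (exp_pos 1).le
    rw [hq]
    calc _ < _ := sum_powersetCard_prod_lt_pow (nonempty_range_iff.2 (by omega))
          (fun i _ => by positivity) hk
      _ ≤ 1 := pow_le_one₀ (by positivity) ((div_le_one (by positivity)).2 (hH.trans h))
  refine ⟨hlt, fun m hm => ?_⟩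
  rw [hm] at hpos hlt
  have : (0 : ℤ) < m := by exact_mod_cast hpos
  have : m < 1 := by exact_mod_cast hlt
  omega
end

section
/- Let k and n be positive integers with 1 < k ≤ n, and suppose there exists an odd prime p > 2k+6 such that n/(k+3) < p ≤ n/k and p does not divide (3k²+11k+9)(k²+5k+5). Then the k-th elementary symmetric function S_k(n) of 1, 1/3, ..., 1/(2n-1) is not an integer; in fact its p-adic valuation equals −k. -/
/-!
Write `p = 2q + 1` and `S_k(n) = N / Q` with `N = ∑_{#s = k} ∏_{i ∉ s} (2i + 1)` and
`Q = ∏_{i < n} (2i + 1)`. The odd numbers below `2n` divisible by `p` are the `(2j + 1) p` with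
`j < m := (n + q) / p`, and the bounds on `p` give `k ≤ m ≤ k + 3`. Modulo `p ^ (m - k + 1)` only
the terms of `N` whose `s` consists of multiples of `p` survive; they add up to `p ^ (m - k)` times
a `p`-adic unit times `e_{m-k}(1, 3, …, 2m - 1)`. For `m - k ≤ 3` the latter is `1`, `m²`,
`(k+1)(k+2)(3k²+11k+9)/6` or `(k+1)(k+2)(k+3)²(k²+5k+5)/6`, all prime to `p`. Hence
`v_p(N) = m - k`, `v_p(Q) = m` and `v_p(S_k(n)) = -k < 0`.
-/

open Finset

section ComplementaryProducts

variable {ι : Type*} [DecidableEq ι] {A D s : Finset ι} {f : ι → ℕ} {p k : ℕ}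

theorem sum_powersetCard_prod_sdiff_of_subset (hDA : D ⊆ A) (hk : k ≤ #D) :
    ∑ s ∈ D.powersetCard k, ∏ i ∈ A \ s, f i =
      (∏ i ∈ A \ D, f i) * ∑ t ∈ D.powersetCard (#D - k), ∏ i ∈ t, f i := by
  rw [mul_sum]
  refine sum_nbij' (D \ ·) (D \ ·) ?_ ?_ ?_ ?_ ?_
  · intro s hs
    obtain ⟨hsD, hsk⟩ := mem_powersetCard.mp hs
    exact mem_powersetCard.mpr ⟨sdiff_subset, by rw [card_sdiff_of_subset hsD, hsk]⟩
  · intro t ht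
    obtain ⟨htD, htk⟩ := mem_powersetCard.mp ht
    exact mem_powersetCard.mpr ⟨sdiff_subset, by rw [card_sdiff_of_subset htD, htk]; omega⟩
  · intro s hs
    exact Finset.sdiff_sdiff_eq_self (mem_powersetCard.mp hs).1
  · intro t ht
    exact Finset.sdiff_sdiff_eq_self (mem_powersetCard.mp ht).1
  · intro s hs
    rw [← prod_sdiff (sdiff_subset_sdiff hDA (subset_refl s)),
      sdiff_sdiff_sdiff_cancel_right (mem_powersetCard.mp hs).1]

theorem pow_dvd_prod_sdiff_of_not_subset (hDA : D ⊆ A) (hk : k ≤ #D) (hdvd : ∀ i ∈ D, p ∣ f i)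
    (hs : #s = k) (hsD : ¬ s ⊆ D) : p ^ (#D - k + 1) ∣ ∏ i ∈ A \ s, f i := by
  have hinter : #(D ∩ s) < #s :=
    card_lt_card ⟨inter_subset_right, fun h => hsD (h.trans inter_subset_left)⟩
  have hcard : #D - k + 1 ≤ #(D \ s) := by
    have := card_sdiff_add_card_inter D s
    omega
  calc p ^ (#D - k + 1) ∣ p ^ #(D \ s) := pow_dvd_pow p hcard
    _ ∣ ∏ i ∈ D \ s, f i :=
      prod_const p ▸ prod_dvd_prod_of_dvd _ _ fun i hi => hdvd i (mem_sdiff.mp hi).1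
    _ ∣ ∏ i ∈ A \ s, f i := prod_dvd_prod_of_subset _ _ _ (sdiff_subset_sdiff hDA (subset_refl s))

omit [DecidableEq ι] in
theorem sum_powersetCard_prod_eq_pow_mul (hdvd : ∀ i ∈ D, p ∣ f i) (r : ℕ) :
    ∑ t ∈ D.powersetCard r, ∏ i ∈ t, f i = p ^ r * ∑ t ∈ D.powersetCard r, ∏ i ∈ t, f i / p := by
  rw [mul_sum]
  refine sum_congr rfl fun t ht => ?_
  obtain ⟨htD, rfl⟩ := mem_powersetCard.mp ht
  rw [← prod_const, ← prod_mul_distrib]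
  exact prod_congr rfl fun i hi => (Nat.mul_div_cancel' (hdvd i (htD hi))).symm

theorem padicValNat_pow_mul_of_not_dvd [Fact p.Prime] {u : ℕ} (hu : ¬ p ∣ u) (a : ℕ) :
    padicValNat p (p ^ a * u) = a := by
  rw [padicValNat.mul (pow_ne_zero _ (Fact.out : p.Prime).ne_zero) (by rintro rfl; simp at hu),
    padicValNat.prime_pow, padicValNat.eq_zero_of_not_dvd hu, add_zero]

theorem padicValNat_sum_powersetCard_prod_sdiff [Fact p.Prime] (hDA : D ⊆ A) (hk : k ≤ #D)
    (hdvd : ∀ i ∈ D, p ∣ f i)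
    (hunit : ¬ p ∣ (∏ i ∈ A \ D, f i) * ∑ t ∈ D.powersetCard (#D - k), ∏ i ∈ t, f i / p) :
    padicValNat p (∑ s ∈ A.powersetCard k, ∏ i ∈ A \ s, f i) = #D - k := by
  obtain ⟨w, hw⟩ : p ^ (#D - k + 1) ∣
      ∑ s ∈ A.powersetCard k \ D.powersetCard k, ∏ i ∈ A \ s, f i := by
    refine dvd_sum fun s hs => ?_
    obtain ⟨hsA, hsD⟩ := mem_sdiff.mp hs
    have hsk := (mem_powersetCard.mp hsA).2
    exact pow_dvd_prod_sdiff_of_not_subset hDA hk hdvd hsk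
      fun h => hsD (mem_powersetCard.mpr ⟨h, hsk⟩)
  rw [← sum_sdiff (powersetCard_mono hDA), hw, sum_powersetCard_prod_sdiff_of_subset hDA hk,
    sum_powersetCard_prod_eq_pow_mul hdvd, pow_succ, mul_left_comm, mul_assoc, ← mul_add,
    padicValNat_pow_mul_of_not_dvd]
  rwa [Nat.dvd_add_right (dvd_mul_right p w)]

end ComplementaryProducts

theorem sum_powersetCard_prod_inv {ι K : Type*} [DecidableEq ι] [Field K] {A : Finset ι}
    {f : ι → K} (hf : ∀ i ∈ A, f i ≠ 0) (k : ℕ) :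
    ∑ s ∈ A.powersetCard k, ∏ i ∈ s, (f i)⁻¹ =
      (∑ s ∈ A.powersetCard k, ∏ i ∈ A \ s, f i) / ∏ i ∈ A, f i := by
  rw [sum_div]
  refine sum_congr rfl fun s hs => ?_
  have hsA := (mem_powersetCard.mp hs).1
  rw [eq_div_iff (prod_ne_zero_iff.mpr hf), ← prod_sdiff hsA, prod_inv_distrib]
  have : ∏ i ∈ s, f i ≠ 0 := prod_ne_zero_iff.mpr fun i hi => hf i (hsA hi)
  field_simp

theorem sum_powersetCard_prod_one_div_eq_div (n k : ℕ) :
    ∑ s ∈ (range n).powersetCard k, ∏ i ∈ s, (1 / (1 + 2 * i) : ℚ) =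
      ((∑ s ∈ (range n).powersetCard k, ∏ i ∈ range n \ s, (2 * i + 1) : ℕ) : ℚ) /
        ((∏ i ∈ range n, (2 * i + 1) : ℕ) : ℚ) := by
  push_cast
  simp_rw [one_div, add_comm (1 : ℚ)]
  exact sum_powersetCard_prod_inv (fun i _ => by positivity) k

def oddEsymm (r m : ℕ) : ℕ := ∑ t ∈ (range m).powersetCard r, ∏ j ∈ t, (2 * j + 1)

namespace oddEsymm

theorem zero_left (m : ℕ) : oddEsymm 0 m = 1 := by
  simp [oddEsymm]

theorem of_lt {r m : ℕ} (h : m < r) : oddEsymm r m = 0 := by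
  rw [oddEsymm, powersetCard_eq_empty.mpr (by simpa using h), sum_empty]

theorem self (m : ℕ) : oddEsymm m m = ∏ j ∈ range m, (2 * j + 1) := by
  have h := powersetCard_self (range m)
  rw [card_range] at h
  rw [oddEsymm, h, sum_singleton]

theorem succ_succ (r m : ℕ) :
    oddEsymm (r + 1) (m + 1) = oddEsymm (r + 1) m + (2 * m + 1) * oddEsymm r m := by
  have hm : m ∉ range m := notMem_range_self
  have hnot : ∀ t ∈ (range m).powersetCard r, m ∉ t := fun t ht hmt =>
    hm ((mem_powersetCard.mp ht).1 hmt)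
  simp only [oddEsymm]
  rw [range_add_one, powersetCard_succ_insert hm, sum_union, sum_image, mul_sum]
  · exact congrArg _ (sum_congr rfl fun t ht => prod_insert (hnot t ht))
  · intro t ht t' ht' h
    simpa [erase_insert (hnot t ht), erase_insert (hnot t' ht')] using congrArg (erase · m) h
  · refine disjoint_right.mpr fun t ht ht' => ?_
    obtain ⟨u, hu, rfl⟩ := mem_image.mp ht
    exact hm ((mem_powersetCard.mp ht').1 (mem_insert_self m u))

theorem one (m : ℕ) : oddEsymm 1 m = m ^ 2 := by
  induction m with
  | zero => exact of_lt one_pos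
  | succ m ih => rw [succ_succ, ih, zero_left]; ring

theorem six_mul_two (m : ℕ) :
    6 * oddEsymm 2 (m + 2) = (m + 1) * (m + 2) * (3 * m ^ 2 + 11 * m + 9) := by
  induction m with
  | zero => simp [succ_succ, zero_left, of_lt]
  | succ m ih => rw [succ_succ, mul_add, ih, one]; ring

theorem six_mul_three (m : ℕ) :
    6 * oddEsymm 3 (m + 3) = (m + 1) * (m + 2) * (m + 3) ^ 2 * (m ^ 2 + 5 * m + 5) := by
  induction m with
  | zero => simp [succ_succ, zero_left, of_lt]
  | succ m ih => rw [succ_succ, mul_add, ih, mul_left_comm, six_mul_two]; ring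

end oddEsymm

theorem not_dvd_oddEsymm_self {p m : ℕ} (hp : p.Prime) (hm : 2 * m < p) :
    ¬ p ∣ oddEsymm m m := by
  rw [oddEsymm.self, hp.prime.dvd_finsetProd_iff]
  rintro ⟨j, hj, hdvd⟩
  exact Nat.not_dvd_of_pos_of_lt (by omega) (by simp at hj; omega) hdvd

theorem not_dvd_oddEsymm_sub {p k m : ℕ} (hp : p.Prime) (hpk : 2 * k + 6 < p) (hkm : k ≤ m)
    (hmk : m ≤ k + 3) (hnd : ¬ p ∣ (3 * k ^ 2 + 11 * k + 9) * (k ^ 2 + 5 * k + 5)) :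
    ¬ p ∣ oddEsymm (m - k) m := by
  have hsmall : ∀ x, 0 < x → x < p → ¬ p ∣ x := fun x h0 hx => Nat.not_dvd_of_pos_of_lt h0 hx
  rw [hp.dvd_mul, not_or] at hnd
  obtain ⟨r, rfl⟩ : ∃ r, m = k + r := ⟨m - k, by omega⟩
  rw [Nat.add_sub_cancel_left]
  have hr : r ≤ 3 := by omega
  intro h
  have h6 := dvd_mul_of_dvd_right h 6
  interval_cases r
  · exact hp.ne_one (Nat.dvd_one.mp (oddEsymm.zero_left _ ▸ h))
  · rw [oddEsymm.one] at h
    exact hsmall _ (by omega) (by omega) (hp.dvd_of_dvd_pow h)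
  · rw [oddEsymm.six_mul_two] at h6
    simp only [hp.dvd_mul] at h6
    obtain (h | h) | h := h6
    exacts [hsmall _ (by omega) (by omega) h, hsmall _ (by omega) (by omega) h, hnd.1 h]
  · rw [oddEsymm.six_mul_three] at h6
    simp only [hp.dvd_mul, hp.prime.dvd_pow_iff_dvd two_ne_zero] at h6
    obtain ((h | h) | h) | h := h6
    exacts [hsmall _ (by omega) (by omega) h, hsmall _ (by omega) (by omega) h,
      hsmall _ (by omega) (by omega) h, hnd.2 h]

def oddMultipleIndex (q : ℕ) : ℕ ↪ ℕ :=
  ⟨fun j => j * (2 * q + 1) + q,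
    fun _ _ h => Nat.eq_of_mul_eq_mul_right (Nat.succ_pos _) (Nat.add_right_cancel h)⟩

theorem oddMultipleIndex_apply (q j : ℕ) : oddMultipleIndex q j = j * (2 * q + 1) + q := rfl

theorem two_mul_oddMultipleIndex_add_one (q j : ℕ) :
    2 * oddMultipleIndex q j + 1 = (2 * j + 1) * (2 * q + 1) := by
  rw [oddMultipleIndex_apply]
  ring

theorem dvd_two_mul_add_one_iff (q i : ℕ) :
    2 * q + 1 ∣ 2 * i + 1 ↔ ∃ j, oddMultipleIndex q j = i := by
  constructor
  · rintro ⟨c, hc⟩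
    obtain ⟨j, rfl⟩ : Odd c := (Nat.odd_mul.mp (hc ▸ odd_two_mul_add_one i)).2
    have h := (two_mul_oddMultipleIndex_add_one q j).trans ((mul_comm _ _).trans hc.symm)
    exact ⟨j, by omega⟩
  · rintro ⟨j, rfl⟩
    exact ⟨2 * j + 1, by rw [two_mul_oddMultipleIndex_add_one, mul_comm]⟩

theorem oddMultipleIndex_lt_iff (q j n : ℕ) :
    oddMultipleIndex q j < n ↔ j < (n + q) / (2 * q + 1) := by
  rw [oddMultipleIndex_apply, ← Nat.add_one_le_iff (n := j),
    Nat.le_div_iff_mul_le (by omega), add_one_mul]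
  omega

theorem div_mem_Icc_of_mul_le_of_lt {q k n : ℕ} (hle : (2 * q + 1) * k ≤ n)
    (hlt : n < (2 * q + 1) * (k + 3)) : (n + q) / (2 * q + 1) ∈ Icc k (k + 3) := by
  refine mem_Icc.mpr ⟨(Nat.le_div_iff_mul_le (by omega)).mpr (by nlinarith), ?_⟩
  exact Nat.lt_add_one_iff.mp ((Nat.div_lt_iff_lt_mul (by omega)).mpr (by nlinarith))

theorem range_filter_dvd_two_mul_add_one (q n : ℕ) :
    (range n).filter (fun i => 2 * q + 1 ∣ 2 * i + 1) =
      (range ((n + q) / (2 * q + 1))).map (oddMultipleIndex q) := by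
  ext i
  simp only [mem_filter, mem_range, mem_map, dvd_two_mul_add_one_iff, ← oddMultipleIndex_lt_iff]
  constructor
  · rintro ⟨hi, j, rfl⟩
    exact ⟨j, hi, rfl⟩
  · rintro ⟨j, hj, rfl⟩
    exact ⟨hj, j, rfl⟩

theorem sum_powersetCard_map_oddMultipleIndex (q r m : ℕ) :
    ∑ t ∈ ((range m).map (oddMultipleIndex q)).powersetCard r,
        ∏ i ∈ t, (2 * i + 1) / (2 * q + 1) = oddEsymm r m := by
  simp only [powersetCard_map, sum_map, RelEmbedding.coe_toEmbedding, mapEmbedding_apply,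
    prod_map, two_mul_oddMultipleIndex_add_one, Nat.mul_div_cancel _ (Nat.succ_pos _), oddEsymm]

theorem padicValNat_sum_powersetCard_prod_range_sdiff_two_mul_add_one {q n r : ℕ}
    [hp : Fact (2 * q + 1).Prime] (hr : r ≤ (n + q) / (2 * q + 1))
    (hunit : ¬ 2 * q + 1 ∣ oddEsymm ((n + q) / (2 * q + 1) - r) ((n + q) / (2 * q + 1))) :
    padicValNat (2 * q + 1) (∑ s ∈ (range n).powersetCard r, ∏ i ∈ range n \ s, (2 * i + 1)) =
      (n + q) / (2 * q + 1) - r := by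
  set D := (range n).filter (fun i => 2 * q + 1 ∣ 2 * i + 1)
  have hD : D = _ := range_filter_dvd_two_mul_add_one q n
  have hcard : #D = (n + q) / (2 * q + 1) := by rw [hD, card_map, card_range]
  rw [← hcard] at hr ⊢
  refine padicValNat_sum_powersetCard_prod_sdiff (filter_subset _ _) hr
    (fun i hi => (mem_filter.mp hi).2) ?_
  rw [hp.out.dvd_mul, not_or, hp.out.prime.dvd_finsetProd_iff]
  constructor
  · rintro ⟨i, hi, hdvd⟩
    exact (mem_sdiff.mp hi).2 (mem_filter.mpr ⟨(mem_sdiff.mp hi).1, hdvd⟩)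
  · rwa [hcard, hD, sum_powersetCard_map_oddMultipleIndex]

theorem esymm_not_int_of_prime (k n p : ℕ) (hk : 1 < k) (hkn : k ≤ n)
    (hp : p.Prime) (hodd : Odd p) (hp2k : p > 2 * k + 6)
    (hlow : (n : ℝ) / (k + 3) < p) (hupp : (p : ℝ) ≤ (n : ℝ) / k)
    (hnd : ¬ p ∣ (3 * k ^ 2 + 11 * k + 9) * (k ^ 2 + 5 * k + 5)) :
    padicValRat p (∑ s ∈ (Finset.range n).powersetCard k, ∏ i ∈ s, (1 / (1 + 2 * i) : ℚ))
      = -(k : ℤ) ∧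
    ∀ m : ℤ, (∑ s ∈ (Finset.range n).powersetCard k, ∏ i ∈ s, (1 / (1 + 2 * i) : ℚ)) ≠ m := by
  obtain ⟨q, rfl⟩ := hodd
  have := Fact.mk hp
  have hle : (2 * q + 1) * k ≤ n := by
    exact_mod_cast (le_div_iff₀ (by exact_mod_cast (by omega : 0 < k))).mp hupp
  have hlt : n < (2 * q + 1) * (k + 3) := by
    exact_mod_cast (div_lt_iff₀ (by positivity)).mp hlow
  obtain ⟨hkm, hmk⟩ := mem_Icc.mp (div_mem_Icc_of_mul_le_of_lt hle hlt)
  have hN := padicValNat_sum_powersetCard_prod_range_sdiff_two_mul_add_one hkm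
    (not_dvd_oddEsymm_sub hp hp2k hkm hmk hnd)
  have hQ := padicValNat_sum_powersetCard_prod_range_sdiff_two_mul_add_one (n := n) (Nat.zero_le _)
    (not_dvd_oddEsymm_self hp (by omega))
  simp only [powersetCard_zero, sum_singleton, sdiff_empty] at hQ
  have hN0 : 0 < ∑ s ∈ (range n).powersetCard k, ∏ i ∈ range n \ s, (2 * i + 1) :=
    sum_pos (fun s _ => by positivity) (powersetCard_nonempty.mpr (by simpa using hkn))
  have hval : padicValRat (2 * q + 1)
      (∑ s ∈ (range n).powersetCard k, ∏ i ∈ s, (1 / (1 + 2 * i) : ℚ)) = -(k : ℤ) := by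
    rw [sum_powersetCard_prod_one_div_eq_div, padicValRat.div (by positivity) (by positivity),
      padicValRat.of_nat, padicValRat.of_nat, hN, hQ]
    omega
  refine ⟨hval, fun z hz => ?_⟩
  rw [hz, padicValRat.of_int] at hval
  omega
end

section
/- For any integer n > 1, the sum ∑_{i=0}^{n-1} 1/(1+2i) is not an integer. -/
/-!
Let `3 ^ k` be the largest power of `3` not exceeding `2 * n - 1`. Among the odd numbers
`1, 3, …, 2 * n - 1`, only `3 ^ k` itself is divisible by `3 ^ k`, since `3 * 3 ^ k` is already too
large. So exactly one term of the sum has `3`-adic valuation `-k` and all others have larger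
valuation; by the ultrametric inequality the sum has valuation `-k < 0`, so it is not an integer.
-/

lemma padicValRat_sum_eq_of_lt_erase {p j : ℕ} [Fact p.Prime] {F : ℕ → ℚ} {S : Finset ℕ}
    (hj : j ∈ S) (hF : ∀ i, 0 < F i)
    (hlt : ∀ i ∈ S.erase j, padicValRat p (F j) < padicValRat p (F i)) :
    padicValRat p (∑ i ∈ S, F i) = padicValRat p (F j) := by
  rw [← Finset.add_sum_erase S F hj]
  rcases (S.erase j).eq_empty_or_nonempty with hS | hS
  · simp [hS]
  · have hsum : 0 < ∑ i ∈ S.erase j, F i := Finset.sum_pos (fun i _ ↦ hF i) hS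
    exact padicValRat.add_eq_of_lt (add_pos (hF j) hsum).ne' (hF j).ne' hsum.ne'
      (padicValRat.lt_sum_of_lt hS hlt hF)

lemma eq_of_odd_of_dvd_of_lt_three_mul {d x : ℕ} (hx : Odd x) (hdx : d ∣ x) (hlt : x < 3 * d) :
    x = d := by
  obtain ⟨c, rfl⟩ := hdx
  have hc : Odd c := (Nat.odd_mul.mp hx).2
  have hc3 : c < 3 := Nat.lt_of_mul_lt_mul_left (by linarith : d * c < d * 3)
  obtain ⟨c, rfl⟩ := hc
  obtain rfl : c = 0 := by omega
  simp

lemma padicValNat_three_lt_of_odd {x k : ℕ} (hx : Odd x) (hlt : x < 3 ^ (k + 1))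
    (hne : x ≠ 3 ^ k) : padicValNat 3 x < k := by
  by_contra! h
  have hdvd : 3 ^ k ∣ x := (pow_dvd_pow 3 h).trans pow_padicValNat_dvd
  exact hne (eq_of_odd_of_dvd_of_lt_three_mul hx hdvd (by rwa [← pow_succ']))

lemma padicValRat_one_div_one_add_two_mul {p : ℕ} [Fact p.Prime] (i : ℕ) :
    padicValRat p (1 / (1 + 2 * i)) = -padicValNat p (1 + 2 * i) := by
  rw [one_div, padicValRat.inv, ← padicValRat.of_nat]
  push_cast
  rfl

theorem padicValRat_three_sum_recip_odds {n : ℕ} (hn : n ≠ 0) :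
    padicValRat 3 (∑ i ∈ Finset.range n, (1 / (1 + 2 * i) : ℚ)) = -Nat.log 3 (2 * n - 1) := by
  set k := Nat.log 3 (2 * n - 1)
  have hle : 3 ^ k ≤ 2 * n - 1 := Nat.pow_log_le_self 3 (by omega)
  have hlt : 2 * n - 1 < 3 ^ (k + 1) := Nat.lt_pow_succ_log_self (by norm_num) _
  obtain ⟨j, hj⟩ : Odd (3 ^ k) := Odd.pow (by decide)
  rw [add_comm] at hj
  have hjn : j ∈ Finset.range n := Finset.mem_range.mpr (by omega)
  have hvalj : padicValRat 3 (1 / (1 + 2 * j)) = -k := by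
    rw [padicValRat_one_div_one_add_two_mul, ← hj, padicValNat.prime_pow]
  rw [padicValRat_sum_eq_of_lt_erase hjn (fun i ↦ by positivity), hvalj]
  intro i hi
  simp only [Finset.mem_erase, Finset.mem_range] at hi
  rw [hvalj, padicValRat_one_div_one_add_two_mul, neg_lt_neg_iff, Nat.cast_lt]
  exact padicValNat_three_lt_of_odd (by simp [parity_simps])
    (by omega) (by omega)

theorem sum_recip_odds_not_int (n : ℕ) (hn : 1 < n) :
    ∀ m : ℤ, (∑ i ∈ Finset.range n, (1 / (1 + 2 * i) : ℚ)) ≠ m := by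
  intro m hm
  have hval := padicValRat_three_sum_recip_odds (n := n) (by omega)
  have hk : 1 ≤ Nat.log 3 (2 * n - 1) := Nat.le_log_of_pow_le (by norm_num) (by omega)
  rw [hm, padicValRat.of_int] at hval
  omega
end
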